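/- Let n ≥ 2, d₁,…,d_n ∈ ℝ, and let U ⊆ ℝⁿ be an open set all of whose points have pairwise distinct coordinates. Let β_ij (i ≠ j) be smooth functions on U, set β_ii := 0, and define V_ij = (u^j − u^i)β_ij − (d_j − d₁)δ_ij. Let H₁,…,H_n be smooth functions on U satisfying (L1) ∂_j H_i = β_ij H_j for all i ≠ j and (L2) Σ_l ∂_l H_i = 0 for all i. If μ ∈ ℝ is such that V H = μ H on U (where H = (H₁,…,H_n)ᵀ), then E(H_i) = (d_i − d₁ + μ) H_i on U for every i = 1,…,n. -/
import Mathlib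


/-- Partial derivative `∂_i f` of a function `f : ℝⁿ → ℝ` at `x`. -/
noncomputable def pd {n : ℕ} (i : Fin n) (f : (Fin n → ℝ) → ℝ) (x : Fin n → ℝ) : ℝ :=
  fderiv ℝ f x (Pi.single i 1)

/-- The Lax matrix `V_ij = (u^j - u^i) β_ij - (d_j - d₁) δ_ij`. -/
noncomputable def Vmat {n : ℕ} (d : Fin n → ℝ) (d1 : ℝ)
    (β : Fin n → Fin n → (Fin n → ℝ) → ℝ) (x : Fin n → ℝ) :
    Matrix (Fin n) (Fin n) ℝ :=
  Matrix.of fun i j => (x j - x i) * β i j x - (d j - d1) * (if i = j then 1 else 0)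

theorem eigenvectors_of_lax_matrix_are_homogeneous {n : ℕ} (hn : 2 ≤ n) (d : Fin n → ℝ)
    (U : Set (Fin n → ℝ)) (hU : IsOpen U)
    (hdist : ∀ x ∈ U, ∀ i j : Fin n, i ≠ j → x i ≠ x j)
    (β : Fin n → Fin n → (Fin n → ℝ) → ℝ)
    (hβ : ∀ i j : Fin n, i ≠ j → ContDiffOn ℝ (⊤ : ℕ∞) (β i j) U)
    (hβdiag : ∀ i : Fin n, ∀ x ∈ U, β i i x = 0)
    (H : Fin n → (Fin n → ℝ) → ℝ)
    (hH : ∀ i, ContDiffOn ℝ (⊤ : ℕ∞) (H i) U)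
    (hL1 : ∀ i j : Fin n, i ≠ j → ∀ x ∈ U, pd j (H i) x = β i j x * H j x)
    (hL2 : ∀ i : Fin n, ∀ x ∈ U, ∑ l, pd l (H i) x = 0)
    (μ : ℝ)
    (hEig : ∀ x ∈ U, ∀ i : Fin n,
      ∑ j, Vmat d (d ⟨0, by omega⟩) β x i j * H j x = μ * H i x) :
    ∀ x ∈ U, ∀ i : Fin n,
      ∑ l, x l * pd l (H i) x = (d i - d ⟨0, by omega⟩ + μ) * H i x := by
  intro x hx i
  set d1 := d (⟨0, by omega⟩ : Fin n) with hd1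
  have hsplit : ∀ f : Fin n → ℝ, ∑ l, f l = f i + ∑ l ∈ Finset.univ.erase i, f l :=
    fun f => (Finset.add_sum_erase _ f (Finset.mem_univ i)).symm
  set A := pd i (H i) x with hA
  set T := ∑ l ∈ Finset.univ.erase i, β i l x * H l x with hT
  set S := ∑ l ∈ Finset.univ.erase i, x l * (β i l x * H l x) with hS
  -- L2 gives A + T = 0
  have h2 : A + T = 0 := by
    have := hL2 i x hx
    rw [hsplit] at this
    rw [hT]
    convert this using 2
    exact Finset.sum_congr rfl fun l hl =>
      (hL1 i l (Finset.ne_of_mem_erase hl).symm x hx).symm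
  -- Eigen equation
  have hE : S - x i * T - (d i - d1) * H i x = μ * H i x := by
    have he := hEig x hx i
    rw [hsplit] at he
    have hii : Vmat d d1 β x i i * H i x = -((d i - d1) * H i x) := by
      simp [Vmat, hβdiag i x hx]; ring
    have hrest : ∑ j ∈ Finset.univ.erase i, Vmat d d1 β x i j * H j x
        = S - x i * T := by
      rw [hS, hT, Finset.mul_sum, ← Finset.sum_sub_distrib]
      refine Finset.sum_congr rfl fun j hj => ?_
      have hij : i ≠ j := (Finset.ne_of_mem_erase hj).symm
      simp [Vmat, if_neg hij]; ring
    rw [hii, hrest] at he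
    linarith
  -- LHS computation
  have hL : ∑ l, x l * pd l (H i) x = x i * A + S := by
    rw [hsplit, hS]
    congr 1
    exact Finset.sum_congr rfl fun l hl => by
      rw [hL1 i l (Finset.ne_of_mem_erase hl).symm x hx]
  rw [hL]
  have hTA : T = -A := by linarith
  have hx2 : x i * T = -(x i * A) := by rw [hTA]; ring
  linarith
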